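/- arXiv:2604.25279 — 2 statements merged into one kernel-verified Lean document; each statement's English description precedes it below -/
import Mathlib

section
/- Along the ESSA iteration under Assumption 1, with M₁, M₂ uniform bounds on the states and costates respectively, set M₄ = (1 + √(k+1)·M₁)(1 + M₂) and M₃ = (M₄²/ε⁰_min)·‖μ‖²_{L²([t₀,T])}. Then for all i ∈ ℕ, ε^i_min · ‖u^i − u^{i−1}‖²_{L²([t₀,T])} ≤ M₃, where ε^i_min > 0 is the smallest eigenvalue of the diagonal matrix C^i ≻ 0. -/
open MeasureTheory Filter Set
open scoped RealInnerProductSpace Topology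

noncomputable section

/-- `ℝⁿ` with the Euclidean norm. -/
abbrev Vec (n : ℕ) := EuclideanSpace ℝ (Fin n)

/-- `ℝ^{(k+1)n}`, the space of tuples `X = (x₀,…,x_k)` with the Euclidean norm. -/
abbrev XVec (k n : ℕ) := PiLp 2 (fun _ : Fin (k + 1) => Vec n)

variable {n m k : ℕ}

/-- Update the `i`-th block of `X`. -/
def updX (X : XVec k n) (i : Fin (k + 1)) (ξ : Vec n) : XVec k n :=
  WithLp.toLp 2 (Function.update X i ξ)

/-- The delayed-state tuple `X_h(t) = (x(t-h₀),…,x(t-h_k))`. -/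
def Xh (hdel : Fin (k + 1) → ℝ) (x : ℝ → Vec n) (t : ℝ) : XVec k n :=
  WithLp.toLp 2 (fun i => x (t - hdel i))

variable {F : Type*} [NormedAddCommGroup F] [NormedSpace ℝ F]

/-- Partial (Fréchet) derivative of `ψ(X,u)` with respect to the block `x_i`. -/
def pdX (ψ : XVec k n → Vec m → F) (i : Fin (k + 1)) (X : XVec k n) (v : Vec m) :
    Vec n →L[ℝ] F :=
  fderiv ℝ (fun ξ => ψ (updX X i ξ) v) (X i)

/-- Partial (Fréchet) derivative of `ψ(X,u)` with respect to `u`. -/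
def pdU (ψ : XVec k n → Vec m → F) (X : XVec k n) (v : Vec m) : Vec m →L[ℝ] F :=
  fderiv ℝ (fun w => ψ X w) v

/-- Partial derivative in `x_i` for a function of `(X,u,λ)`. -/
def pd3X (g : XVec k n → Vec m → Vec n → F) (i : Fin (k + 1)) (X : XVec k n)
    (v : Vec m) (p : Vec n) : Vec n →L[ℝ] F :=
  fderiv ℝ (fun ξ => g (updX X i ξ) v p) (X i)

/-- Partial derivative in `u` for a function of `(X,u,λ)`. -/
def pd3U (g : XVec k n → Vec m → Vec n → F) (X : XVec k n) (v : Vec m) (p : Vec n) :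
    Vec m →L[ℝ] F :=
  fderiv ℝ (fun w => g X w p) v

/-- Partial derivative in `λ` for a function of `(X,u,λ)`. -/
def pd3L (g : XVec k n → Vec m → Vec n → F) (X : XVec k n) (v : Vec m) (p : Vec n) :
    Vec n →L[ℝ] F :=
  fderiv ℝ (fun q => g X v q) p

/-- Gradient of a scalar function of `X` with respect to the block `x_i`. -/
def gradXj (g : XVec k n → ℝ) (i : Fin (k + 1)) (X : XVec k n) : Vec n :=
  gradient (fun ξ => g (updX X i ξ)) (X i)

/-- Gradient in `u` of a scalar function of `(X,u,λ)`. -/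
def grad3U (g : XVec k n → Vec m → Vec n → ℝ) (X : XVec k n) (v : Vec m) (p : Vec n) :
    Vec m :=
  gradient (fun w => g X w p) v

/-- Assumption 1 of the paper for `ψ ∈ {f,ℓ}`. -/
structure Assumption1 {G : Type*} [NormedAddCommGroup G] [NormedSpace ℝ G]
    [MeasurableSpace G] (ψ : ℝ → XVec k n → Vec m → G) (U : Set (Vec m)) (t₀ T : ℝ)
    (μ : ℝ → ℝ) : Prop where
  smooth : ∀ t, ContDiff ℝ 2 (fun q : XVec k n × Vec m => ψ t q.1 q.2)
  meas : ∀ X v, Measurable fun t => ψ t X v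
  μ_meas : Measurable μ
  μ_nonneg : ∀ t, 0 ≤ μ t
  μ_L2 : MemLp μ 2 (volume.restrict (Set.Icc t₀ T))
  bd_val : ∀ t ∈ Set.Icc t₀ T, ∀ (X : XVec k n), ∀ v ∈ U, ‖ψ t X v‖ ≤ μ t * (‖X‖ + 1)
  bd_X : ∀ t ∈ Set.Icc t₀ T, ∀ (X : XVec k n), ∀ v ∈ U, ∀ i,
      ‖pdX (ψ t) i X v‖ ≤ μ t * (‖X‖ + 1)
  bd_U : ∀ t ∈ Set.Icc t₀ T, ∀ (X : XVec k n), ∀ v ∈ U, ‖pdU (ψ t) X v‖ ≤ μ t * (‖X‖ + 1)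
  bd_XX : ∀ t ∈ Set.Icc t₀ T, ∀ (X : XVec k n), ∀ v ∈ U, ∀ i j,
      ‖pdX (fun X' v' => pdX (ψ t) i X' v') j X v‖ ≤ μ t * (‖X‖ + 1)
  bd_XU : ∀ t ∈ Set.Icc t₀ T, ∀ (X : XVec k n), ∀ v ∈ U, ∀ i,
      ‖pdU (fun X' v' => pdX (ψ t) i X' v') X v‖ ≤ μ t * (‖X‖ + 1)
  bd_UX : ∀ t ∈ Set.Icc t₀ T, ∀ (X : XVec k n), ∀ v ∈ U, ∀ i,
      ‖pdX (fun X' v' => pdU (ψ t) X' v') i X v‖ ≤ μ t * (‖X‖ + 1)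
  bd_UU : ∀ t ∈ Set.Icc t₀ T, ∀ (X : XVec k n), ∀ v ∈ U,
      ‖pdU (fun X' v' => pdU (ψ t) X' v') X v‖ ≤ μ t * (‖X‖ + 1)

/-- The Hamiltonian `H(t,X,u,λ) = (ℓ(t,X,u) + λᵀ f(t,X,u))·1_{(-∞,T]}(t)`. -/
def Ham (f : ℝ → XVec k n → Vec m → Vec n) (l : ℝ → XVec k n → Vec m → ℝ) (T : ℝ)
    (t : ℝ) (X : XVec k n) (v : Vec m) (p : Vec n) : ℝ :=
  Set.indicator (Set.Iic T) (fun _ => l t X v + ⟪p, f t X v⟫) t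

/-- A measurable control with values in `U` on `[t₀,T]` (membership in `𝒰`). -/
def IsControl (U : Set (Vec m)) (t₀ T : ℝ) (u : ℝ → Vec m) : Prop :=
  Measurable u ∧ ∀ t ∈ Set.Icc t₀ T, u t ∈ U

/-- (Carathéodory/absolutely continuous) solution of the delay system
`ẋ(t) = f(t,X_h(t),u(t))` a.e. on `[t₀,T]`, `x(t₀+θ)=φ(θ)` on `[-h,0]`. -/
def IsSolution (f : ℝ → XVec k n → Vec m → Vec n) (t₀ T hmax : ℝ)
    (hdel : Fin (k + 1) → ℝ) (φ : ℝ → Vec n) (u : ℝ → Vec m) (x : ℝ → Vec n) : Prop :=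
  (∀ θ ∈ Set.Icc (-hmax) (0 : ℝ), x (t₀ + θ) = φ θ) ∧
  IntervalIntegrable (fun s => f s (Xh hdel x s) (u s)) volume t₀ T ∧
  ∀ t ∈ Set.Icc t₀ T, x t = φ 0 + ∫ s in t₀..t, f s (Xh hdel x s) (u s)

/-- Right-hand side `∑_{j=0}^k ∇_{x_j}H(s+h_j, X_h(s+h_j), u(s+h_j), λ(s+h_j))`
of the costate equation. -/
def costateRHS (f : ℝ → XVec k n → Vec m → Vec n) (l : ℝ → XVec k n → Vec m → ℝ)
    (T : ℝ) (hdel : Fin (k + 1) → ℝ) (u : ℝ → Vec m) (x : ℝ → Vec n)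
    (lam : ℝ → Vec n) (s : ℝ) : Vec n :=
  ∑ j : Fin (k + 1),
    gradXj (fun X => Ham f l T (s + hdel j) X (u (s + hdel j)) (lam (s + hdel j))) j
      (Xh hdel x (s + hdel j))

/-- (Absolutely continuous) solution of the costate equation
`λ̇(t) = -∑_j ∇_{x_j}H(t+h_j, X_h(t+h_j), u(t+h_j), λ(t+h_j))` a.e. on `[t₀,T]`,
with `λ(t) = 0` for `t ≥ T`. -/
def IsCostate (f : ℝ → XVec k n → Vec m → Vec n) (l : ℝ → XVec k n → Vec m → ℝ)
    (t₀ T : ℝ) (hdel : Fin (k + 1) → ℝ) (u : ℝ → Vec m) (x : ℝ → Vec n)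
    (lam : ℝ → Vec n) : Prop :=
  (∀ t, T ≤ t → lam t = 0) ∧
  IntervalIntegrable (costateRHS f l T hdel u x lam) volume t₀ T ∧
  ∀ t ∈ Set.Icc t₀ T, lam t = ∫ s in t..T, costateRHS f l T hdel u x lam s

/-- The cost functional `J(u) = ∫_{t₀}^T ℓ(t, X_h(t), u(t)) dt` (with `x` the state
corresponding to `u`). -/
def cost (l : ℝ → XVec k n → Vec m → ℝ) (t₀ T : ℝ) (hdel : Fin (k + 1) → ℝ)
    (u : ℝ → Vec m) (x : ℝ → Vec n) : ℝ :=
  ∫ t in t₀..T, l t (Xh hdel x t) (u t)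

/-- Squared `L²([t₀,T])` distance between two controls. -/
def dL2sq (t₀ T : ℝ) (u w : ℝ → Vec m) : ℝ :=
  ∫ t in t₀..T, ‖u t - w t‖ ^ 2

/-- `L²([t₀,T])` distance between two controls. -/
def dL2 (t₀ T : ℝ) (u w : ℝ → Vec m) : ℝ :=
  Real.sqrt (dL2sq t₀ T u w)

/-- `L^∞([t₀,T])` (essential sup) distance between two controls. -/
def dLinf (t₀ T : ℝ) (u w : ℝ → Vec m) : ℝ :=
  essSup (fun t => ‖u t - w t‖) (volume.restrict (Set.Icc t₀ T))

/-- Smallest eigenvalue of the positive-definite diagonal matrix with diagonal `c`. -/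
def εmin (c : Fin m → ℝ) : ℝ := ⨅ j, c j

/-- The quadratic form `wᵀ C w` for the diagonal matrix `C = diag c`. -/
def quadC (c : Fin m → ℝ) (w : Vec m) : ℝ := ∑ j, c j * (w j) ^ 2

/-- The vector `C w` for the diagonal matrix `C = diag c`. -/
def diagMul (c : Fin m → ℝ) (w : Vec m) : Vec m := WithLp.toLp 2 (fun j => c j * w j)

/-- Euclidean projection onto `U`: `P_U(q) = argmin_{w ∈ U} ‖q - w‖`. -/
def projU (U : Set (Vec m)) (q : Vec m) : Vec m :=
  Classical.epsilon fun w => w ∈ U ∧ ∀ z ∈ U, ‖q - w‖ ≤ ‖q - z‖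

/-- Assumption 2: `H_uu(t,X,u,λ) ⪰ R ⪰ 0`, with `rmin` the smallest eigenvalue of
`R` (equivalently, `H_uu ⪰ rmin·I` with `rmin ≥ 0`). -/
def Assumption2 (f : ℝ → XVec k n → Vec m → Vec n) (l : ℝ → XVec k n → Vec m → ℝ)
    (t₀ T : ℝ) (rmin : ℝ) : Prop :=
  0 ≤ rmin ∧ ∀ t ∈ Set.Icc t₀ T, ∀ (X : XVec k n) (v : Vec m) (p : Vec n) (w : Vec m),
    rmin * ‖w‖ ^ 2 ≤ pd3U (fun X' v' p' => pd3U (Ham f l T t) X' v' p') X v p w w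

/-- The ESSA iteration: controls `u^i`, states `x^i`, costates `λ^i` and diagonal
matrices `C^i = diag (c i) ≻ 0` with nondecreasing smallest eigenvalues, where for
a.e. `t`, `u^{i+1}(t)` minimizes the augmented Hamiltonian
`v ↦ H(t, X^{i+1}_h(t), v, λ^i(t)) + (v - u^i(t))ᵀ C^{i+1} (v - u^i(t))` over `U`. -/
structure ESSA (f : ℝ → XVec k n → Vec m → Vec n) (l : ℝ → XVec k n → Vec m → ℝ)
    (U : Set (Vec m)) (t₀ T hmax : ℝ) (hdel : Fin (k + 1) → ℝ) (φ : ℝ → Vec n)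
    (u : ℕ → ℝ → Vec m) (x : ℕ → ℝ → Vec n) (lam : ℕ → ℝ → Vec n)
    (c : ℕ → Fin m → ℝ) : Prop where
  ctrl : ∀ i, IsControl U t₀ T (u i)
  state : ∀ i, IsSolution f t₀ T hmax hdel φ (u i) (x i)
  costate : ∀ i, IsCostate f l t₀ T hdel (u i) (x i) (lam i)
  cpos : ∀ i j, 0 < c i j
  cmono : ∀ i, εmin (c i) ≤ εmin (c (i + 1))
  step2 : ∀ i : ℕ, ∀ᵐ t ∂(volume.restrict (Set.Icc t₀ T)), ∀ v ∈ U,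
    Ham f l T t (Xh hdel (x (i + 1)) t) (u (i + 1) t) (lam i t)
        + quadC (c (i + 1)) (u (i + 1) t - u i t)
      ≤ Ham f l T t (Xh hdel (x (i + 1)) t) v (lam i t) + quadC (c (i + 1)) (v - u i t)

/-- Weak convergence in `L²([t₀,T]; ℝᵐ)`. -/
def WeakL2Conv (t₀ T : ℝ) (w : ℕ → ℝ → Vec m) (wbar : ℝ → Vec m) : Prop :=
  ∀ g : ℝ → Vec m, MemLp g 2 (volume.restrict (Set.Icc t₀ T)) →
    Tendsto (fun i => ∫ t in t₀..T, ⟪w i t, g t⟫) atTop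
      (𝓝 (∫ t in t₀..T, ⟪wbar t, g t⟫))

/-- A function is piecewise constant on the grid `ρ` if it is constant on every
interval `[ρ_{j-1}, ρ_j)`. -/
def PiecewiseConstOn {N : ℕ} (ρ : Fin (N + 1) → ℝ) (g : ℝ → Vec m) : Prop :=
  ∀ j : Fin N, ∀ t ∈ Set.Ico (ρ j.castSucc) (ρ j.succ), g t = g (ρ j.castSucc)

end

noncomputable section

variable {n m k : ℕ} {F : Type*} [NormedAddCommGroup F] [NormedSpace ℝ F]

/-- Partial (Fréchet) derivative in the block `x_i` of a function of `X` only. -/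
def pdX0 (g : XVec k n → F) (i : Fin (k + 1)) (X : XVec k n) : Vec n →L[ℝ] F :=
  fderiv ℝ (fun ξ => g (updX X i ξ)) (X i)

/-- Assumption 1 for a control-independent function of `(t,X)` (e.g. `f₀`, `ℓ₀`). -/
structure Assumption1X {G : Type*} [NormedAddCommGroup G] [NormedSpace ℝ G]
    [MeasurableSpace G] (ψ : ℝ → XVec k n → G) (t₀ T : ℝ) (μ : ℝ → ℝ) : Prop where
  smooth : ∀ t, ContDiff ℝ 2 (ψ t)
  meas : ∀ X, Measurable fun t => ψ t X
  μ_meas : Measurable μ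
  μ_nonneg : ∀ t, 0 ≤ μ t
  μ_L2 : MemLp μ 2 (volume.restrict (Set.Icc t₀ T))
  bd_val : ∀ t ∈ Set.Icc t₀ T, ∀ (X : XVec k n), ‖ψ t X‖ ≤ μ t * (‖X‖ + 1)
  bd_X : ∀ t ∈ Set.Icc t₀ T, ∀ (X : XVec k n) (i : Fin (k + 1)),
      ‖pdX0 (ψ t) i X‖ ≤ μ t * (‖X‖ + 1)
  bd_XX : ∀ t ∈ Set.Icc t₀ T, ∀ (X : XVec k n) (i j : Fin (k + 1)),
      ‖pdX0 (fun X' => pdX0 (ψ t) i X') j X‖ ≤ μ t * (‖X‖ + 1)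

/-- Assumption 1 for the control-input matrix `G(t,X) ∈ ℝ^{n×m}`. -/
structure Assumption1G (ψ : ℝ → XVec k n → (Vec m →L[ℝ] Vec n)) (t₀ T : ℝ)
    (μ : ℝ → ℝ) : Prop where
  smooth : ∀ t, ContDiff ℝ 2 (ψ t)
  meas : ∀ (X : XVec k n) (w : Vec m), Measurable fun t => ψ t X w
  μ_meas : Measurable μ
  μ_nonneg : ∀ t, 0 ≤ μ t
  μ_L2 : MemLp μ 2 (volume.restrict (Set.Icc t₀ T))
  bd_val : ∀ t ∈ Set.Icc t₀ T, ∀ (X : XVec k n), ‖ψ t X‖ ≤ μ t * (‖X‖ + 1)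
  bd_X : ∀ t ∈ Set.Icc t₀ T, ∀ (X : XVec k n) (i : Fin (k + 1)),
      ‖pdX0 (ψ t) i X‖ ≤ μ t * (‖X‖ + 1)
  bd_XX : ∀ t ∈ Set.Icc t₀ T, ∀ (X : XVec k n) (i j : Fin (k + 1)),
      ‖pdX0 (fun X' => pdX0 (ψ t) i X') j X‖ ≤ μ t * (‖X‖ + 1)

end


/-!
Fix an iterate and a time `t`. Testing the minimality of `u^{i+1}(t)` for the augmented
Hamiltonian against the previous control `u^i(t)` gives, with `Δ = u^{i+1}(t) - u^i(t)`,
`ε^{i+1}_min ‖Δ‖² ≤ Δᵀ C^{i+1} Δ ≤ H(u^i) - H(u^{i+1}) ≤ μ(t) M₄ ‖Δ‖`, the last step by the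
mean value inequality on the convex set `U` and the bound of Assumption 1 on `∂_u ℓ` and
`∂_u f` along the bounded trajectories. Hence `ε^{i+1}_min ‖Δ‖ ≤ μ(t) M₄`, so
`ε^{i+1}_min ‖Δ‖² ≤ (μ(t) M₄)² / ε^{i+1}_min ≤ (μ(t) M₄)² / ε^0_min`, and integrating over
`[t₀,T]` gives the claim.
-/

section Pointwise

variable {n m k : ℕ}

lemma εmin_pos [Nonempty (Fin m)] {c : Fin m → ℝ} (hc : ∀ j, 0 < c j) : 0 < εmin c := by
  obtain ⟨j, hj⟩ := exists_eq_ciInf_of_finite (f := c)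
  simpa [εmin, ← hj] using hc j

lemma εmin_mul_norm_sq_le_quadC (c : Fin m → ℝ) (w : Vec m) :
    εmin c * ‖w‖ ^ 2 ≤ quadC c w := by
  simp only [EuclideanSpace.norm_sq_eq, Real.norm_eq_abs, sq_abs, quadC, Finset.mul_sum]
  exact Finset.sum_le_sum fun j _ =>
    mul_le_mul_of_nonneg_right (ciInf_le (Set.finite_range c).bddBelow j) (sq_nonneg _)

lemma PiLp.norm_le_sqrt_card_mul {ι : Type*} [Fintype ι] {β : ι → Type*}
    [∀ j, SeminormedAddCommGroup (β j)] (X : PiLp 2 β) {M : ℝ} (hM : 0 ≤ M)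
    (hX : ∀ j, ‖X j‖ ≤ M) : ‖X‖ ≤ √(Fintype.card ι) * M := by
  rw [PiLp.norm_eq_of_L2, ← Real.sqrt_sq hM, ← Real.sqrt_mul (Nat.cast_nonneg _)]
  refine Real.sqrt_le_sqrt ?_
  calc ∑ j, ‖X j‖ ^ 2 ≤ ∑ _j : ι, M ^ 2 :=
        Finset.sum_le_sum fun j _ => pow_le_pow_left₀ (norm_nonneg _) (hX j) 2
    _ = Fintype.card ι * M ^ 2 := by simp

lemma norm_Xh_le {hdel : Fin (k + 1) → ℝ} {x : ℝ → Vec n} {t M : ℝ}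
    (hx : ∀ j, ‖x (t - hdel j)‖ ≤ M) : ‖Xh hdel x t‖ ≤ √((k : ℝ) + 1) * M := by
  simpa using PiLp.norm_le_sqrt_card_mul (Xh hdel x t) ((norm_nonneg _).trans (hx 0)) hx

lemma Ham_of_le {f : ℝ → XVec k n → Vec m → Vec n} {l : ℝ → XVec k n → Vec m → ℝ} {T t : ℝ}
    (ht : t ≤ T) (X : XVec k n) (v : Vec m) (p : Vec n) :
    Ham f l T t X v p = l t X v + ⟪p, f t X v⟫ :=
  Set.indicator_of_mem (Set.mem_Iic.2 ht) _

lemma Assumption1.hasFDerivAt_pdU {G : Type*} [NormedAddCommGroup G] [NormedSpace ℝ G]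
    [MeasurableSpace G] {ψ : ℝ → XVec k n → Vec m → G} {U : Set (Vec m)} {t₀ T : ℝ}
    {μ : ℝ → ℝ} (hψ : Assumption1 ψ U t₀ T μ) (t : ℝ) (X : XVec k n) (v : Vec m) :
    HasFDerivAt (fun w => ψ t X w) (pdU (ψ t) X v) v :=
  ((((hψ.smooth t).differentiable (by norm_num)) (X, v)).comp v
    ((differentiableAt_const X).prodMk differentiableAt_id)).hasFDerivAt

lemma abs_Ham_sub_le {t₀ T : ℝ} {U : Set (Vec m)} {f : ℝ → XVec k n → Vec m → Vec n}
    {l : ℝ → XVec k n → Vec m → ℝ} {μ : ℝ → ℝ} (hUconv : Convex ℝ U)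
    (hf : Assumption1 f U t₀ T μ) (hl : Assumption1 l U t₀ T μ)
    {t : ℝ} (ht : t ∈ Set.Icc t₀ T) (X : XVec k n) (p : Vec n)
    {v w : Vec m} (hv : v ∈ U) (hw : w ∈ U) :
    |Ham f l T t X v p - Ham f l T t X w p| ≤ μ t * (‖X‖ + 1) * (‖p‖ + 1) * ‖v - w‖ := by
  let D : Vec m → (Vec m →L[ℝ] ℝ) := fun z =>
    pdU (l t) X z + (innerSL ℝ p).comp (pdU (f t) X z)
  have hD : ∀ z ∈ U, HasFDerivWithinAt (fun z' => l t X z' + ⟪p, f t X z'⟫) (D z) U z :=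
    fun z _ => ((hl.hasFDerivAt_pdU t X z).add
      ((innerSL ℝ p).hasFDerivAt.comp z (hf.hasFDerivAt_pdU t X z))).hasFDerivWithinAt
  have hDbd : ∀ z ∈ U, ‖D z‖ ≤ μ t * (‖X‖ + 1) * (‖p‖ + 1) := fun z hz =>
    calc ‖D z‖ ≤ ‖pdU (l t) X z‖ + ‖innerSL ℝ p‖ * ‖pdU (f t) X z‖ :=
          (norm_add_le _ _).trans (add_le_add_right (ContinuousLinearMap.opNorm_comp_le _ _) _)
      _ ≤ μ t * (‖X‖ + 1) + ‖p‖ * (μ t * (‖X‖ + 1)) := by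
          rw [innerSL_apply_norm]
          gcongr
          exacts [hl.bd_U t ht X z hz, hf.bd_U t ht X z hz]
      _ = μ t * (‖X‖ + 1) * (‖p‖ + 1) := by ring
  rw [Ham_of_le ht.2, Ham_of_le ht.2, ← Real.norm_eq_abs]
  exact hUconv.norm_image_sub_le_of_norm_hasFDerivWithin_le hD hDbd hw hv

lemma mul_sq_le_sq_div_of_mul_sq_le_mul {ε₀ ε a d : ℝ} (hε₀ : 0 < ε₀) (hε : ε₀ ≤ ε)
    (hd : 0 ≤ d) (h : ε * d ^ 2 ≤ a * d) : ε * d ^ 2 ≤ a ^ 2 / ε₀ := by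
  rcases hd.eq_or_lt with rfl | hd
  · simpa using div_nonneg (sq_nonneg a) hε₀.le
  have hεd : ε * d ≤ a := le_of_mul_le_mul_right (by nlinarith) hd
  have hεpos : 0 < ε := hε₀.trans_le hε
  rw [le_div_iff₀ hε₀]
  calc ε * d ^ 2 * ε₀ ≤ ε * d ^ 2 * ε := by gcongr
    _ = (ε * d) ^ 2 := by ring
    _ ≤ a ^ 2 := by gcongr

lemma εmin_mul_norm_sub_sq_le_of_le_augmented {t₀ T : ℝ} {U : Set (Vec m)}
    {f : ℝ → XVec k n → Vec m → Vec n} {l : ℝ → XVec k n → Vec m → ℝ} {μ : ℝ → ℝ}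
    (hUconv : Convex ℝ U) (hf : Assumption1 f U t₀ T μ) (hl : Assumption1 l U t₀ T μ)
    {t : ℝ} (ht : t ∈ Set.Icc t₀ T) (X : XVec k n) (p : Vec n) (c : Fin m → ℝ)
    {v w : Vec m} (hv : v ∈ U) (hw : w ∈ U)
    (hmin : Ham f l T t X v p + quadC c (v - w) ≤ Ham f l T t X w p + quadC c (w - w)) :
    εmin c * ‖v - w‖ ^ 2 ≤ μ t * (‖X‖ + 1) * (‖p‖ + 1) * ‖v - w‖ := by
  have hquad_zero : quadC c (w - w) = 0 := by simp [quadC]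
  calc εmin c * ‖v - w‖ ^ 2 ≤ quadC c (v - w) := εmin_mul_norm_sq_le_quadC c _
    _ ≤ Ham f l T t X w p - Ham f l T t X v p := by linarith
    _ ≤ |Ham f l T t X v p - Ham f l T t X w p| := by
        rw [abs_sub_comm]; exact le_abs_self _
    _ ≤ μ t * (‖X‖ + 1) * (‖p‖ + 1) * ‖v - w‖ := abs_Ham_sub_le hUconv hf hl ht X p hv hw

end Pointwise

lemma intervalIntegral.integral_mono_of_nonneg_ae {f g : ℝ → ℝ} {a b : ℝ} (hab : a ≤ b)
    (hf : 0 ≤ᵐ[volume.restrict (Set.Icc a b)] f) (hg : IntegrableOn g (Set.Icc a b))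
    (hfg : f ≤ᵐ[volume.restrict (Set.Icc a b)] g) :
    ∫ x in a..b, f x ≤ ∫ x in a..b, g x := by
  rw [intervalIntegral.integral_of_le hab, intervalIntegral.integral_of_le hab,
    ← integral_Icc_eq_integral_Ioc, ← integral_Icc_eq_integral_Ioc]
  exact integral_mono_of_nonneg hf hg hfg

namespace ESSA

variable {n m k : ℕ} {f : ℝ → XVec k n → Vec m → Vec n} {l : ℝ → XVec k n → Vec m → ℝ}
  {U : Set (Vec m)} {t₀ T hmax : ℝ} {hdel : Fin (k + 1) → ℝ} {φ : ℝ → Vec n}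
  {u : ℕ → ℝ → Vec m} {x lam : ℕ → ℝ → Vec n} {c : ℕ → Fin m → ℝ}

lemma εmin_zero_le (hessa : ESSA f l U t₀ T hmax hdel φ u x lam c) (i : ℕ) :
    εmin (c 0) ≤ εmin (c i) :=
  monotone_nat_of_le_succ hessa.cmono (Nat.zero_le i)

lemma ae_εmin_mul_norm_sub_sq_le [Nonempty (Fin m)]
    (hessa : ESSA f l U t₀ T hmax hdel φ u x lam c) {μ : ℝ → ℝ} (hUconv : Convex ℝ U)
    (hf : Assumption1 f U t₀ T μ) (hl : Assumption1 l U t₀ T μ)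
    (hdel_mem : ∀ j, hdel j ∈ Set.Icc 0 hmax) {M₁ M₂ : ℝ}
    (hxbd : ∀ i, ∀ t ∈ Set.Icc (t₀ - hmax) T, ‖x i t‖ ≤ M₁)
    (hlambd : ∀ i, ∀ t ∈ Set.Icc t₀ T, ‖lam i t‖ ≤ M₂) (i : ℕ) :
    ∀ᵐ t ∂(volume.restrict (Set.Icc t₀ T)),
      εmin (c (i + 1)) * ‖u (i + 1) t - u i t‖ ^ 2 ≤
        ((1 + √((k : ℝ) + 1) * M₁) * (1 + M₂)) ^ 2 / εmin (c 0) * μ t ^ 2 := by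
  filter_upwards [hessa.step2 i, ae_restrict_mem measurableSet_Icc] with t hstep ht
  set X := Xh hdel (x (i + 1)) t
  have hX : ‖X‖ ≤ √((k : ℝ) + 1) * M₁ := norm_Xh_le fun j =>
    hxbd (i + 1) _ ⟨by linarith [ht.1, (hdel_mem j).2], by linarith [ht.2, (hdel_mem j).1]⟩
  have hp : ‖lam i t‖ ≤ M₂ := hlambd i t ht
  have hμ : 0 ≤ μ t := hl.μ_nonneg t
  have hlin := εmin_mul_norm_sub_sq_le_of_le_augmented hUconv hf hl ht X (lam i t) (c (i + 1))
    ((hessa.ctrl (i + 1)).2 t ht) ((hessa.ctrl i).2 t ht) (hstep _ ((hessa.ctrl i).2 t ht))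
  have hXfactor : μ t * (‖X‖ + 1) ≤ μ t * (1 + √((k : ℝ) + 1) * M₁) :=
    mul_le_mul_of_nonneg_left (by linarith) hμ
  have hM₄ : μ t * (‖X‖ + 1) * (‖lam i t‖ + 1) ≤
      μ t * ((1 + √((k : ℝ) + 1) * M₁) * (1 + M₂)) := by
    rw [← mul_assoc]
    exact mul_le_mul hXfactor (by linarith) (by positivity)
      ((mul_nonneg hμ (by positivity)).trans hXfactor)
  calc _ ≤ (μ t * ((1 + √((k : ℝ) + 1) * M₁) * (1 + M₂))) ^ 2 / εmin (c 0) :=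
        mul_sq_le_sq_div_of_mul_sq_le_mul (εmin_pos (hessa.cpos 0)) (hessa.εmin_zero_le _)
          (norm_nonneg _) (hlin.trans (mul_le_mul_of_nonneg_right hM₄ (norm_nonneg _)))
    _ = _ := by ring

end ESSA

theorem essa_discrepancy_bound_general
    {n m k : ℕ} (t₀ T hmax : ℝ) (hdel : Fin (k + 1) → ℝ) (U : Set (Vec m))
    (f : ℝ → XVec k n → Vec m → Vec n) (l : ℝ → XVec k n → Vec m → ℝ) (μ : ℝ → ℝ)
    (hT : t₀ < T)
    (hdel0 : hdel 0 = 0) (hmono : StrictMono hdel) (hlast : hdel (Fin.last k) = hmax)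
    (hUconv : Convex ℝ U)
    (hf : Assumption1 f U t₀ T μ) (hl : Assumption1 l U t₀ T μ)
    (φ : ℝ → Vec n)
    (u : ℕ → ℝ → Vec m) (x lam : ℕ → ℝ → Vec n) (c : ℕ → Fin m → ℝ)
    (hessa : ESSA f l U t₀ T hmax hdel φ u x lam c)
    (M₁ M₂ : ℝ)
    (hxbd : ∀ i, ∀ t ∈ Set.Icc (t₀ - hmax) T, ‖x i t‖ ≤ M₁)
    (hlambd : ∀ i, ∀ t ∈ Set.Icc t₀ T, ‖lam i t‖ ≤ M₂) :
    ∀ i : ℕ, εmin (c (i + 1)) * dL2sq t₀ T (u (i + 1)) (u i) ≤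
      ((1 + Real.sqrt ((k : ℝ) + 1) * M₁) * (1 + M₂)) ^ 2 / εmin (c 0) *
        ∫ t in t₀..T, (μ t) ^ 2 := by
  intro i
  rcases isEmpty_or_nonempty (Fin m) with hm | hm
  · simp [εmin, Real.iInf_of_isEmpty]
  have hdel_mem : ∀ j, hdel j ∈ Set.Icc 0 hmax := fun j =>
    ⟨hdel0 ▸ hmono.monotone (Fin.zero_le j), hlast ▸ hmono.monotone (Fin.le_last j)⟩
  have hεmin : 0 ≤ εmin (c (i + 1)) := (εmin_pos (hessa.cpos _)).le
  calc εmin (c (i + 1)) * dL2sq t₀ T (u (i + 1)) (u i)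
      = ∫ t in t₀..T, εmin (c (i + 1)) * ‖u (i + 1) t - u i t‖ ^ 2 :=
        (intervalIntegral.integral_const_mul _ _).symm
    _ ≤ ∫ t in t₀..T, ((1 + √((k : ℝ) + 1) * M₁) * (1 + M₂)) ^ 2 / εmin (c 0) * μ t ^ 2 :=
        intervalIntegral.integral_mono_of_nonneg_ae hT.le
          (Eventually.of_forall fun t => by positivity) (hf.μ_L2.integrable_sq.const_mul _)
          (hessa.ae_εmin_mul_norm_sub_sq_le hUconv hf hl hdel_mem hxbd hlambd i)
    _ = _ := intervalIntegral.integral_const_mul _ _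

/-- Proposition 4: regularisation bound
`ε^i_min ‖u^i - u^{i-1}‖²_L² ≤ M₃ = (M₄²/ε⁰_min)‖μ‖²_L²` along the ESSA iteration,
where `M₄ = (1 + √(k+1)·M₁)(1 + M₂)`. -/
theorem essa_discrepancy_bound
    {n m k : ℕ} (t₀ T hmax : ℝ) (hdel : Fin (k + 1) → ℝ) (U : Set (Vec m))
    (f : ℝ → XVec k n → Vec m → Vec n) (l : ℝ → XVec k n → Vec m → ℝ) (μ : ℝ → ℝ)
    (ht₀ : 0 ≤ t₀) (hT : t₀ < T)
    (hdel0 : hdel 0 = 0) (hmono : StrictMono hdel) (hlast : hdel (Fin.last k) = hmax)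
    (hU : IsCompact U) (hUconv : Convex ℝ U) (hUne : U.Nonempty)
    (hf : Assumption1 f U t₀ T μ) (hl : Assumption1 l U t₀ T μ)
    (φ : ℝ → Vec n) (hφ : ContinuousOn φ (Set.Icc (-hmax) (0 : ℝ)))
    (u : ℕ → ℝ → Vec m) (x lam : ℕ → ℝ → Vec n) (c : ℕ → Fin m → ℝ)
    (hessa : ESSA f l U t₀ T hmax hdel φ u x lam c)
    (M₁ M₂ : ℝ) (hM₁ : 0 < M₁) (hM₂ : 0 < M₂)
    (hxbd : ∀ i, ∀ t ∈ Set.Icc (t₀ - hmax) T, ‖x i t‖ ≤ M₁)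
    (hlambd : ∀ i, ∀ t ∈ Set.Icc t₀ T, ‖lam i t‖ ≤ M₂) :
    ∀ i : ℕ, εmin (c (i + 1)) * dL2sq t₀ T (u (i + 1)) (u i) ≤
      ((1 + Real.sqrt ((k : ℝ) + 1) * M₁) * (1 + M₂)) ^ 2 / εmin (c 0) *
        ∫ t in t₀..T, (μ t) ^ 2 :=
  essa_discrepancy_bound_general t₀ T hmax hdel U f l μ hT hdel0 hmono hlast hUconv hf hl φ u x lam
    c hessa M₁ M₂ hxbd hlambd
end

section
/- Under Assumption 1, let u, u' ∈ 𝒰 be two controls and let x, x' be the corresponding solutions of the delay system sharing the same initial condition φ ∈ C([−h,0];ℝⁿ), both uniformly bounded by M₁ on [t₀,T]. Then there exists a constant M > 0, depending only on f, μ, k, T − t₀, M₁ (and not on u, u'), such that sup_{t∈[t₀,T]} ‖x(t) − x'(t)‖ ≤ M·‖u − u'‖_{L²([t₀,T])}. -/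
open MeasureTheory Filter Set
open scoped RealInnerProductSpace Topology

/-!
On the bounded set where the delayed state tuples of both solutions live, Assumption 1 and the
mean value inequality make `f t` Lipschitz with modulus a constant multiple `L t` of `μ t`.
Since both solutions share the initial history, every delayed difference `x (s - hⱼ) - x' (s - hⱼ)`
is bounded by the running supremum `D s` of `‖x - x'‖` over `[t₀, s]`, whence
`D t ≤ ∫ L ‖u - u'‖ + (k + 1) ∫_{t₀}^t L D`. Cutting `[t₀, T]` into pieces on which
`(k + 1) ∫ L ≤ 1/2` and absorbing the last piece into the left-hand side gives a Grönwall bound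
`D ≤ K ∫ L ‖u - u'‖`, and Cauchy–Schwarz with `μ ∈ L²` turns `∫ L ‖u - u'‖` into `‖u - u'‖_{L²}`.
-/

open intervalIntegral

section PartialDerivatives

variable {n m k : ℕ} {F : Type*} [NormedAddCommGroup F] [NormedSpace ℝ F]

def blockEmbedding (i : Fin (k + 1)) : Vec n →L[ℝ] XVec k n :=
  (PiLp.continuousLinearEquiv 2 ℝ (fun _ : Fin (k + 1) => Vec n)).symm.toContinuousLinearMap ∘L
    .pi (Pi.single i (.id ℝ (Vec n)))

lemma blockEmbedding_apply (i : Fin (k + 1)) (ξ : Vec n) :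
    blockEmbedding i ξ = PiLp.single 2 i ξ := by
  ext1 j
  by_cases h : j = i
  · subst h; simp [blockEmbedding]
  · simp [blockEmbedding, h]

lemma sum_blockEmbedding (X : XVec k n) : ∑ i, blockEmbedding i (X i) = X := by
  simp only [blockEmbedding_apply, ← PiLp.toLp_single, ← WithLp.toLp_sum, Finset.univ_sum_single]

lemma hasFDerivAt_updX (X : XVec k n) (i : Fin (k + 1)) :
    HasFDerivAt (updX X i) (blockEmbedding i) (X i) :=
  (PiLp.continuousLinearEquiv 2 ℝ (fun _ : Fin (k + 1) => Vec n)).symm.hasFDerivAt.comp _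
    (hasFDerivAt_update (WithLp.ofLp X) (X i))

lemma fderiv_uncurry_apply {ψ : XVec k n → Vec m → F}
    (hψ : Differentiable ℝ (fun q : XVec k n × Vec m => ψ q.1 q.2))
    (X : XVec k n) (v : Vec m) (h : XVec k n) (w : Vec m) :
    fderiv ℝ (fun q : XVec k n × Vec m => ψ q.1 q.2) (X, v) (h, w)
      = ∑ i, pdX ψ i X v (h i) + pdU ψ X v w := by
  set D := fderiv ℝ (fun q : XVec k n × Vec m => ψ q.1 q.2) (X, v)
  have hD : HasFDerivAt (fun q : XVec k n × Vec m => ψ q.1 q.2) D (X, v) :=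
    (hψ (X, v)).hasFDerivAt
  have hpdX (i : Fin (k + 1)) : pdX ψ i X v = D ∘L (blockEmbedding i).prod 0 := by
    have hupd : HasFDerivAt (fun ξ => (updX X i ξ, v)) ((blockEmbedding i).prod 0) (X i) :=
      (hasFDerivAt_updX X i).prodMk (hasFDerivAt_const v (X i))
    have hX : updX X i (X i) = X := by simp [updX]
    rw [← hX] at hD
    exact (hD.comp (X i) hupd).fderiv
  have hpdU : pdU ψ X v = D ∘L .inr ℝ (XVec k n) (Vec m) :=
    (hD.comp v (hasFDerivAt_prodMk_right X v)).fderiv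
  have hsplit : (h, w) = ∑ i, (blockEmbedding i (h i), (0 : Vec m)) + (0, w) := by
    rw [← prod_mk_sum, sum_blockEmbedding, Finset.sum_const_zero, Prod.mk_add_mk, add_zero,
      zero_add]
  rw [hsplit, map_add, map_sum, hpdU]
  simp only [hpdX]
  rfl

lemma norm_fderiv_uncurry_le {ψ : XVec k n → Vec m → F}
    (hψ : Differentiable ℝ (fun q : XVec k n × Vec m => ψ q.1 q.2))
    {X : XVec k n} {v : Vec m} {C : ℝ} (hC : 0 ≤ C)
    (hX : ∀ i, ‖pdX ψ i X v‖ ≤ C) (hU : ‖pdU ψ X v‖ ≤ C) :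
    ‖fderiv ℝ (fun q : XVec k n × Vec m => ψ q.1 q.2) (X, v)‖ ≤ ((k : ℝ) + 2) * C := by
  refine ContinuousLinearMap.opNorm_le_bound _ (by positivity) fun ⟨h, w⟩ => ?_
  have hblock (i : Fin (k + 1)) : ‖pdX ψ i X v (h i)‖ ≤ C * ‖(h, w)‖ :=
    (pdX ψ i X v).le_of_opNorm_le (hX i) _ |>.trans <| mul_le_mul_of_nonneg_left
      ((PiLp.norm_apply_le h i).trans (norm_fst_le (h, w))) hC
  have hctrl : ‖pdU ψ X v w‖ ≤ C * ‖(h, w)‖ :=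
    (pdU ψ X v).le_of_opNorm_le hU _ |>.trans <|
      mul_le_mul_of_nonneg_left (norm_snd_le (h, w)) hC
  calc ‖fderiv ℝ (fun q : XVec k n × Vec m => ψ q.1 q.2) (X, v) (h, w)‖
      ≤ ∑ i, ‖pdX ψ i X v (h i)‖ + ‖pdU ψ X v w‖ := by
        rw [fderiv_uncurry_apply hψ]
        exact (norm_add_le _ _).trans (add_le_add_left (norm_sum_le _ _) _)
    _ ≤ ∑ _i : Fin (k + 1), C * ‖(h, w)‖ + C * ‖(h, w)‖ := by gcongr with i; exact hblock i
    _ = ((k : ℝ) + 2) * C * ‖(h, w)‖ := by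
        simp only [Finset.sum_const, Finset.card_univ, Fintype.card_fin, nsmul_eq_mul, Nat.cast_add,
          Nat.cast_one]
        ring

end PartialDerivatives

section LocalLipschitz

variable {n m k : ℕ} {G : Type*} [NormedAddCommGroup G] [NormedSpace ℝ G] [MeasurableSpace G]

lemma Assumption1.norm_sub_le {ψ : ℝ → XVec k n → Vec m → G} {U : Set (Vec m)} {t₀ T : ℝ}
    {μ : ℝ → ℝ} (hψ : Assumption1 ψ U t₀ T μ) (hU : Convex ℝ U) {t : ℝ} (ht : t ∈ Icc t₀ T)
    {R : ℝ} {X X' : XVec k n} (hX : ‖X‖ ≤ R) (hX' : ‖X'‖ ≤ R)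
    {v v' : Vec m} (hv : v ∈ U) (hv' : v' ∈ U) :
    ‖ψ t X v - ψ t X' v'‖ ≤ μ t * (((k : ℝ) + 2) * (R + 1)) * (‖X - X'‖ + ‖v - v'‖) := by
  have hdiff : Differentiable ℝ (fun q : XVec k n × Vec m => ψ t q.1 q.2) :=
    (hψ.smooth t).differentiable (by norm_num)
  have hbound : ∀ q ∈ Metric.closedBall (0 : XVec k n) R ×ˢ U,
      ‖fderiv ℝ (fun q : XVec k n × Vec m => ψ t q.1 q.2) q‖
        ≤ μ t * (((k : ℝ) + 2) * (R + 1)) := by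
    rintro ⟨Y, w⟩ ⟨hY, hw⟩
    have hle : μ t * (‖Y‖ + 1) ≤ μ t * (R + 1) :=
      mul_le_mul_of_nonneg_left (by simpa using hY) (hψ.μ_nonneg t)
    calc _ ≤ ((k : ℝ) + 2) * (μ t * (R + 1)) :=
          norm_fderiv_uncurry_le hdiff (mul_nonneg (hψ.μ_nonneg t) (by linarith [norm_nonneg X]))
            (fun i => (hψ.bd_X t ht Y w hw i).trans hle) ((hψ.bd_U t ht Y w hw).trans hle)
      _ = _ := by ring
  have hmem : (X, v) ∈ Metric.closedBall (0 : XVec k n) R ×ˢ U :=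
    ⟨mem_closedBall_zero_iff.mpr hX, hv⟩
  have hmem' : (X', v') ∈ Metric.closedBall (0 : XVec k n) R ×ˢ U :=
    ⟨mem_closedBall_zero_iff.mpr hX', hv'⟩
  calc ‖ψ t X v - ψ t X' v'‖
      ≤ μ t * (((k : ℝ) + 2) * (R + 1)) * ‖((X, v) : XVec k n × Vec m) - (X', v')‖ :=
        ((convex_closedBall _ _).prod hU).norm_image_sub_le_of_norm_fderiv_le
          (fun q _ => hdiff q) hbound hmem' hmem
    _ ≤ μ t * (((k : ℝ) + 2) * (R + 1)) * (‖X - X'‖ + ‖v - v'‖) := by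
        gcongr
        · exact mul_nonneg (hψ.μ_nonneg t) (by nlinarith [norm_nonneg X])
        · rw [Prod.mk_sub_mk, Prod.norm_mk]
          exact max_le (le_add_of_nonneg_right (norm_nonneg _))
            (le_add_of_nonneg_left (norm_nonneg _))

end LocalLipschitz

lemma MeasureTheory.IntegrableOn.intervalIntegrable_of_mem_Icc {E : Type*}
    [NormedAddCommGroup E] {φ : ℝ → E} {a b c d : ℝ} (hφ : IntegrableOn φ (Icc a b))
    (hc : c ∈ Icc a b) (hd : d ∈ Icc a b) : IntervalIntegrable φ volume c d :=
  (hφ.mono_set (uIcc_subset_Icc hc hd)).intervalIntegrable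

section Gronwall

variable {g D : ℝ → ℝ} {t₀ T a : ℝ}

lemma MonotoneOn.integral_mul_le (hD : MonotoneOn D (Icc t₀ T)) (hT : t₀ ≤ T)
    (hg : IntegrableOn g (Icc t₀ T)) (hg0 : ∀ s ∈ Icc t₀ T, 0 ≤ g s) :
    ∫ s in t₀..T, g s * D s ≤ (∫ s in t₀..T, g s) * D T := by
  rw [← intervalIntegral.integral_mul_const]
  refine integral_mono_on hT
    ((intervalIntegrable_iff_integrableOn_Icc_of_le hT).2
      (hg.mul_of_top_left (hD.memLp_isCompact isCompact_Icc)))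
    ((intervalIntegrable_iff_integrableOn_Icc_of_le hT).2 hg |>.mul_const _) fun s hs => ?_
  exact mul_le_mul_of_nonneg_left (hD hs (right_mem_Icc.2 hT) hs.2) (hg0 s hs)

lemma MonotoneOn.le_two_mul_add_of_le_add_integral_mul (hD : MonotoneOn D (Icc t₀ T))
    (hD0 : ∀ t ∈ Icc t₀ T, 0 ≤ D t) (hg : IntegrableOn g (Icc t₀ T))
    (hg0 : ∀ s ∈ Icc t₀ T, 0 ≤ g s) (h : ∀ t ∈ Icc t₀ T, D t ≤ a + ∫ s in t₀..t, g s * D s)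
    {σ t B : ℝ} (hσ : σ ∈ Icc t₀ t) (ht : t ∈ Icc t₀ T) (hB : ∀ s ∈ Icc t₀ σ, D s ≤ B)
    (hgσt : ∫ s in σ..t, g s ≤ 1 / 2) :
    D t ≤ 2 * a + 2 * (∫ s in t₀..σ, g s) * B := by
  have hσT : σ ∈ Icc t₀ T := ⟨hσ.1, hσ.2.trans ht.2⟩
  have ht₀ : t₀ ∈ Icc t₀ T := left_mem_Icc.2 (hσT.1.trans hσT.2)
  have hgD : IntegrableOn (fun s => g s * D s) (Icc t₀ T) :=
    hg.mul_of_top_left (hD.memLp_isCompact isCompact_Icc)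
  have hhead : ∫ s in t₀..σ, g s * D s ≤ (∫ s in t₀..σ, g s) * B := by
    rw [← intervalIntegral.integral_mul_const]
    refine integral_mono_on hσ.1 (hgD.intervalIntegrable_of_mem_Icc ht₀ hσT)
      ((hg.intervalIntegrable_of_mem_Icc ht₀ hσT).mul_const _) fun s hs => ?_
    exact mul_le_mul_of_nonneg_left (hB s hs) (hg0 s ⟨hs.1, hs.2.trans hσT.2⟩)
  have hσt : Icc σ t ⊆ Icc t₀ T := Icc_subset_Icc hσT.1 ht.2
  have htail := (hD.mono hσt).integral_mul_le hσ.2 (hg.mono_set hσt) fun s hs => hg0 s (hσt hs)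
  have hsplit := integral_add_adjacent_intervals (hgD.intervalIntegrable_of_mem_Icc ht₀ hσT)
    (hgD.intervalIntegrable_of_mem_Icc hσT ht)
  linarith [h t ht, mul_le_mul_of_nonneg_right hgσt (hD0 t ht)]

lemma MonotoneOn.le_pow_mul_of_le_add_integral_mul (hD : MonotoneOn D (Icc t₀ T))
    (hD0 : ∀ t ∈ Icc t₀ T, 0 ≤ D t) (hg : IntegrableOn g (Icc t₀ T))
    (hg0 : ∀ s ∈ Icc t₀ T, 0 ≤ g s) (h : ∀ t ∈ Icc t₀ T, D t ≤ a + ∫ s in t₀..t, g s * D s) :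
    ∀ t ∈ Icc t₀ T, D t ≤ (2 + 2 * ∫ s in t₀..T, g s) ^ ⌈2 * ∫ s in t₀..T, g s⌉₊ * a := by
  intro t ht
  have ht₀ : t₀ ∈ Icc t₀ T := left_mem_Icc.2 (ht.1.trans ht.2)
  set G : ℝ → ℝ := fun t => ∫ s in t₀..t, g s
  set A := ∫ s in t₀..T, g s
  have hGsub {c d : ℝ} (hc : c ∈ Icc t₀ T) (hd : d ∈ Icc t₀ T) :
      ∫ s in c..d, g s = G d - G c :=
    (integral_interval_sub_left (hg.intervalIntegrable_of_mem_Icc ht₀ hd)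
      (hg.intervalIntegrable_of_mem_Icc ht₀ hc)).symm
  have hGmono : MonotoneOn G (Icc t₀ T) := fun c hc d hd hcd => by
    linarith [hGsub hc hd, integral_nonneg (μ := volume) hcd fun s hs =>
      hg0 s ⟨hc.1.trans hs.1, hs.2.trans hd.2⟩]
  have hG0 : G t₀ = 0 := integral_same
  have hGA {s : ℝ} (hs : s ∈ Icc t₀ T) : G s ≤ A := hGmono hs (right_mem_Icc.2 ht₀.2) hs.2
  have hA0 : 0 ≤ A := hG0 ▸ hGA ht₀
  have ha : 0 ≤ a := by simpa using (hD0 t₀ ht₀).trans (h t₀ ht₀)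
  -- induction on the level `i / 2` reached by `G`: each level costs a factor `2 + 2A`
  have key (i : ℕ) : ∀ t ∈ Icc t₀ T, G t ≤ i / 2 → D t ≤ (2 + 2 * A) ^ i * a := by
    induction i with
    | zero =>
      intro t ht hGt
      have hGt0 : G t ≤ 0 := by simpa using hGt
      have := (hD.mono (Icc_subset_Icc_right ht.2)).integral_mul_le ht.1
        (hg.mono_set (Icc_subset_Icc_right ht.2)) fun s hs => hg0 s ⟨hs.1, hs.2.trans ht.2⟩
      nlinarith [h t ht, hD0 t ht]
    | succ i ih =>
      intro t ht hGt
      set B := (2 + 2 * A) ^ i * a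
      have hB : a ≤ B := le_mul_of_one_le_left ha (one_le_pow₀ (by linarith))
      rcases le_or_gt (G t) (i / 2) with hle | hlt
      · exact (ih t ht hle).trans (by rw [pow_succ]; nlinarith)
      obtain ⟨σ, hσ, hGσ⟩ : ∃ σ ∈ Icc t₀ t, G σ = i / 2 :=
        intermediate_value_Icc ht.1
          ((continuousOn_primitive_interval (hg.mono_set (uIcc_subset_Icc ht₀ ht))).mono
            Icc_subset_uIcc) ⟨by rw [integral_same]; positivity, hlt.le⟩
      have hσT : σ ∈ Icc t₀ T := ⟨hσ.1, hσ.2.trans ht.2⟩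
      have hstep : D t ≤ 2 * a + 2 * G σ * B :=
        hD.le_two_mul_add_of_le_add_integral_mul hD0 hg hg0 h hσ ht
          (fun s hs => ih s ⟨hs.1, hs.2.trans hσT.2⟩
            ((hGmono ⟨hs.1, hs.2.trans hσT.2⟩ hσT hs.2).trans hGσ.le))
          (by rw [hGsub hσT ht]; push_cast at hGt; linarith)
      rw [pow_succ]
      nlinarith [mul_le_mul_of_nonneg_right (hGA hσT) (ha.trans hB)]
  exact key _ t ht <| (hGA ht).trans <| by linarith [Nat.le_ceil (2 * A)]

end Gronwall

section RunningSup

noncomputable def runningSup (v : ℝ → ℝ) (t₀ t : ℝ) : ℝ := sSup (v '' Icc t₀ t)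

variable {v : ℝ → ℝ} {t₀ T t r c : ℝ}

lemma le_runningSup (hv : BddAbove (v '' Icc t₀ T)) (hr : r ∈ Icc t₀ t) (ht : t ≤ T) :
    v r ≤ runningSup v t₀ t :=
  le_csSup (hv.mono (image_mono (Icc_subset_Icc_right ht))) (mem_image_of_mem v hr)

lemma runningSup_le (ht : t₀ ≤ t) (h : ∀ r ∈ Icc t₀ t, v r ≤ c) : runningSup v t₀ t ≤ c :=
  csSup_le ((nonempty_Icc.2 ht).image v) (forall_mem_image.2 h)

lemma monotoneOn_runningSup (hv : BddAbove (v '' Icc t₀ T)) :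
    MonotoneOn (runningSup v t₀) (Icc t₀ T) := fun _ hs _ ht hst =>
  csSup_le_csSup (hv.mono (image_mono (Icc_subset_Icc_right ht.2)))
    ((nonempty_Icc.2 hs.1).image v) (image_mono (Icc_subset_Icc_right hst))

lemma runningSup_nonneg (hv0 : ∀ r ∈ Icc t₀ T, 0 ≤ v r) (hv : BddAbove (v '' Icc t₀ T))
    (ht : t ∈ Icc t₀ T) : 0 ≤ runningSup v t₀ t :=
  (hv0 t₀ ⟨le_rfl, ht.1.trans ht.2⟩).trans (le_runningSup hv (left_mem_Icc.2 ht.1) ht.2)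

lemma MeasureTheory.IntegrableOn.mul_runningSup {g : ℝ → ℝ} (hg : IntegrableOn g (Icc t₀ T))
    (hv : BddAbove (v '' Icc t₀ T)) :
    IntegrableOn (fun s => g s * runningSup v t₀ s) (Icc t₀ T) :=
  hg.mul_of_top_left ((monotoneOn_runningSup hv).memLp_isCompact isCompact_Icc)

lemma le_pow_mul_of_le_integral_mul_runningSup_add {g w : ℝ → ℝ}
    (hv0 : ∀ r ∈ Icc t₀ T, 0 ≤ v r) (hv : BddAbove (v '' Icc t₀ T))
    (hg : IntegrableOn g (Icc t₀ T)) (hg0 : ∀ s ∈ Icc t₀ T, 0 ≤ g s)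
    (hw : IntegrableOn w (Icc t₀ T)) (hw0 : ∀ s ∈ Icc t₀ T, 0 ≤ w s)
    (h : ∀ r ∈ Icc t₀ T, v r ≤ ∫ s in t₀..r, (g s * runningSup v t₀ s + w s)) :
    ∀ t ∈ Icc t₀ T, v t ≤
      (2 + 2 * ∫ s in t₀..T, g s) ^ ⌈2 * ∫ s in t₀..T, g s⌉₊ * ∫ s in t₀..T, w s := by
  have hgD := hg.mul_runningSup hv
  have hnonneg {φ : ℝ → ℝ} (hφ : ∀ s ∈ Icc t₀ T, 0 ≤ φ s) {d : ℝ} (hd : d ≤ T) :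
      0 ≤ᵐ[volume.restrict (Ioc t₀ d)] φ :=
    (ae_restrict_iff' measurableSet_Ioc).2 (ae_of_all _ fun s hs => hφ s ⟨hs.1.le, hs.2.trans hd⟩)
  intro t ht
  refine (le_runningSup hv (right_mem_Icc.2 ht.1) ht.2).trans
    ((monotoneOn_runningSup hv).le_pow_mul_of_le_add_integral_mul
      (fun _ ht => runningSup_nonneg hv0 hv ht) hg hg0
      (fun t ht => runningSup_le ht.1 fun r hr => ?_) t ht)
  have hrT : r ∈ Icc t₀ T := ⟨hr.1, hr.2.trans ht.2⟩
  have ht₀ : t₀ ∈ Icc t₀ T := left_mem_Icc.2 (hrT.1.trans hrT.2)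
  have hTmem : T ∈ Icc t₀ T := right_mem_Icc.2 (hrT.1.trans hrT.2)
  calc v r ≤ ∫ s in t₀..r, (g s * runningSup v t₀ s + w s) := h r hrT
    _ = (∫ s in t₀..r, g s * runningSup v t₀ s) + ∫ s in t₀..r, w s :=
        integral_add (hgD.intervalIntegrable_of_mem_Icc ht₀ hrT)
          (hw.intervalIntegrable_of_mem_Icc ht₀ hrT)
    _ ≤ (∫ s in t₀..t, g s * runningSup v t₀ s) + ∫ s in t₀..T, w s := by
        gcongr ?_ + ?_
        · exact integral_mono_interval le_rfl hr.1 hr.2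
            (hnonneg (fun s hs => mul_nonneg (hg0 s hs) (runningSup_nonneg hv0 hv hs)) ht.2)
            (hgD.intervalIntegrable_of_mem_Icc ht₀ ht)
        · exact integral_mono_interval le_rfl hr.1 hrT.2 (hnonneg hw0 le_rfl)
            (hw.intervalIntegrable_of_mem_Icc ht₀ hTmem)
    _ = (∫ s in t₀..T, w s) + ∫ s in t₀..t, g s * runningSup v t₀ s := add_comm _ _

end RunningSup

section DelaySystem

variable {n m k : ℕ} {hdel : Fin (k + 1) → ℝ} {hmax t₀ T s : ℝ}

lemma norm_le_sum_norm_block (X : XVec k n) : ‖X‖ ≤ ∑ j, ‖X j‖ :=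
  calc ‖X‖ = ‖∑ j, blockEmbedding j (X j)‖ := by rw [sum_blockEmbedding]
    _ ≤ ∑ j, ‖blockEmbedding j (X j)‖ := norm_sum_le _ _
    _ = ∑ j, ‖X j‖ := by simp only [blockEmbedding_apply, PiLp.norm_single]

lemma norm_Xh_le_of_norm_le (hh : ∀ j, hdel j ∈ Icc 0 hmax) {y : ℝ → Vec n} {c : ℝ}
    (hy : ∀ r ∈ Icc (s - hmax) s, ‖y r‖ ≤ c) : ‖Xh hdel y s‖ ≤ ((k : ℝ) + 1) * c :=
  calc ‖Xh hdel y s‖ ≤ ∑ j, ‖y (s - hdel j)‖ := norm_le_sum_norm_block _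
    _ ≤ ∑ _j : Fin (k + 1), c :=
        Finset.sum_le_sum fun j _ => hy _ ⟨by linarith [(hh j).2], by linarith [(hh j).1]⟩
    _ = ((k : ℝ) + 1) * c := by simp

variable {f : ℝ → XVec k n → Vec m → Vec n} {φ : ℝ → Vec n} {u u' : ℝ → Vec m}
  {x x' : ℝ → Vec n}

lemma IsSolution.apply_eq (hx : IsSolution f t₀ T hmax hdel φ u x) {r : ℝ}
    (hr : r ∈ Icc (t₀ - hmax) t₀) : x r = φ (r - t₀) := by
  simpa using hx.1 (r - t₀) ⟨by linarith [hr.1], by linarith [hr.2]⟩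

lemma IsSolution.norm_Xh_le (hh : ∀ j, hdel j ∈ Icc 0 hmax)
    (hx : IsSolution f t₀ T hmax hdel φ u x) {M₁ Cφ : ℝ}
    (hφ : ∀ θ ∈ Icc (-hmax) 0, ‖φ θ‖ ≤ Cφ) (hb : ∀ t ∈ Icc t₀ T, ‖x t‖ ≤ M₁)
    (hs : s ∈ Icc t₀ T) : ‖Xh hdel x s‖ ≤ ((k : ℝ) + 1) * max M₁ Cφ := by
  refine norm_Xh_le_of_norm_le hh fun r hr => ?_
  rcases le_total t₀ r with h | h
  · exact (hb r ⟨h, hr.2.trans hs.2⟩).trans (le_max_left _ _)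
  · rw [hx.apply_eq ⟨by linarith [hr.1, hs.1], h⟩]
    exact (hφ _ ⟨by linarith [hr.1, hs.1], by linarith⟩).trans (le_max_right _ _)

lemma IsSolution.norm_Xh_sub_le (hh : ∀ j, hdel j ∈ Icc 0 hmax)
    (hx : IsSolution f t₀ T hmax hdel φ u x) (hx' : IsSolution f t₀ T hmax hdel φ u' x')
    (hv : BddAbove ((fun r => ‖x r - x' r‖) '' Icc t₀ T)) (hs : s ∈ Icc t₀ T) :
    ‖Xh hdel x s - Xh hdel x' s‖ ≤ ((k : ℝ) + 1) * runningSup (fun r => ‖x r - x' r‖) t₀ s := by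
  refine norm_Xh_le_of_norm_le (y := x - x') hh fun r hr => ?_
  rcases le_total t₀ r with h | h
  · exact le_runningSup hv ⟨h, hr.2⟩ hs.2
  · have hr' : r ∈ Icc (t₀ - hmax) t₀ := ⟨by linarith [hr.1, hs.1], h⟩
    rw [Pi.sub_apply, hx.apply_eq hr', hx'.apply_eq hr', sub_self, norm_zero]
    exact runningSup_nonneg (fun _ _ => norm_nonneg _) hv hs

lemma IsSolution.norm_sub_le_integral (hx : IsSolution f t₀ T hmax hdel φ u x)
    (hx' : IsSolution f t₀ T hmax hdel φ u' x') {b : ℝ → ℝ} (hb : IntegrableOn b (Icc t₀ T))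
    (hF : ∀ s ∈ Icc t₀ T,
      ‖f s (Xh hdel x s) (u s) - f s (Xh hdel x' s) (u' s)‖ ≤ b s) :
    ∀ r ∈ Icc t₀ T, ‖x r - x' r‖ ≤ ∫ s in t₀..r, b s := by
  intro r hr
  have hsub : uIcc t₀ r ⊆ uIcc t₀ T := uIcc_subset_uIcc_left (Icc_subset_uIcc hr)
  have hFx := hx.2.1.mono_set hsub
  have hFx' := hx'.2.1.mono_set hsub
  rw [hx.2.2 r hr, hx'.2.2 r hr, add_sub_add_left_eq_sub, ← integral_sub hFx hFx']
  refine (intervalIntegral.norm_integral_le_integral_norm hr.1).trans <|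
    integral_mono_on hr.1 (hFx.sub hFx').norm
      (hb.intervalIntegrable_of_mem_Icc (left_mem_Icc.2 (hr.1.trans hr.2)) hr) fun s hs => ?_
  exact hF s ⟨hs.1, hs.2.trans hr.2⟩

lemma IsSolution.norm_sub_le_pow_mul_integral (hh : ∀ j, hdel j ∈ Icc 0 hmax)
    (hx : IsSolution f t₀ T hmax hdel φ u x) (hx' : IsSolution f t₀ T hmax hdel φ u' x')
    (hv : BddAbove ((fun r => ‖x r - x' r‖) '' Icc t₀ T)) {L : ℝ → ℝ}
    (hL : IntegrableOn L (Icc t₀ T)) (hL0 : ∀ s ∈ Icc t₀ T, 0 ≤ L s)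
    (hLu : IntegrableOn (fun s => L s * ‖u s - u' s‖) (Icc t₀ T))
    (hlip : ∀ s ∈ Icc t₀ T, ‖f s (Xh hdel x s) (u s) - f s (Xh hdel x' s) (u' s)‖
      ≤ L s * (‖Xh hdel x s - Xh hdel x' s‖ + ‖u s - u' s‖)) :
    ∀ t ∈ Icc t₀ T, ‖x t - x' t‖ ≤ (2 + 2 * ∫ s in t₀..T, ((k : ℝ) + 1) * L s) ^
      ⌈2 * ∫ s in t₀..T, ((k : ℝ) + 1) * L s⌉₊ * ∫ s in t₀..T, L s * ‖u s - u' s‖ := by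
  have hkL : IntegrableOn (fun s => ((k : ℝ) + 1) * L s) (Icc t₀ T) := hL.const_mul _
  refine le_pow_mul_of_le_integral_mul_runningSup_add (fun _ _ => norm_nonneg _) hv hkL
    (fun s hs => mul_nonneg (by positivity) (hL0 s hs)) hLu
    (fun s hs => mul_nonneg (hL0 s hs) (norm_nonneg _))
    (hx.norm_sub_le_integral hx' ((hkL.mul_runningSup hv).add hLu) fun s hs => ?_)
  calc _ ≤ L s * (‖Xh hdel x s - Xh hdel x' s‖ + ‖u s - u' s‖) := hlip s hs
    _ ≤ L s * (((k : ℝ) + 1) * runningSup (fun r => ‖x r - x' r‖) t₀ s + ‖u s - u' s‖) := by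
        gcongr
        · exact hL0 s hs
        · exact hx.norm_Xh_sub_le hh hx' hv hs
    _ = _ := by ring

end DelaySystem

section Controls

variable {m : ℕ} {U : Set (Vec m)} {t₀ T : ℝ} {u w : ℝ → Vec m}

lemma IsControl.memLp (hU : IsCompact U) (hu : IsControl U t₀ T u) (p : ENNReal) :
    MemLp u p (volume.restrict (Icc t₀ T)) := by
  obtain ⟨C, hC⟩ := hU.isBounded.exists_norm_le
  exact .of_bound hu.1.aestronglyMeasurable C
    ((ae_restrict_iff' measurableSet_Icc).2 (ae_of_all _ fun t ht => hC _ (hu.2 t ht)))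

lemma integral_mul_norm_sub_le_sqrt_mul_dL2 (hT : t₀ ≤ T) {L : ℝ → ℝ} (hL0 : ∀ s, 0 ≤ L s)
    (hL : MemLp L 2 (volume.restrict (Icc t₀ T)))
    (huw : MemLp (fun s => u s - w s) 2 (volume.restrict (Icc t₀ T))) :
    ∫ s in t₀..T, L s * ‖u s - w s‖ ≤ √(∫ s in t₀..T, L s ^ 2) * dL2 t₀ T u w := by
  have := integral_mul_le_Lp_mul_Lq_of_nonneg Real.HolderConjugate.two_two (ae_of_all _ hL0)
    (ae_of_all _ fun s => norm_nonneg (u s - w s)) (by simpa using hL) (by simpa using huw.norm)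
  simp only [Real.rpow_two, ← Real.sqrt_eq_rpow] at this
  simpa only [dL2, dL2sq, integral_of_le hT, integral_Icc_eq_integral_Ioc] using this

end Controls

theorem state_discrepancy_estimate_general
    {n m k : ℕ} (t₀ T hmax : ℝ) (hdel : Fin (k + 1) → ℝ) (U : Set (Vec m))
    (f : ℝ → XVec k n → Vec m → Vec n) (μ : ℝ → ℝ)
    (hT : t₀ < T)
    (hdel0 : hdel 0 = 0) (hmono : StrictMono hdel) (hlast : hdel (Fin.last k) = hmax)
    (hU : IsCompact U) (hUconv : Convex ℝ U)
    (hf : Assumption1 f U t₀ T μ)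
    (φ : ℝ → Vec n) (hφ : ContinuousOn φ (Set.Icc (-hmax) (0 : ℝ)))
    (M₁ : ℝ) :
    ∃ M > (0 : ℝ), ∀ (u u' : ℝ → Vec m) (x x' : ℝ → Vec n),
      IsControl U t₀ T u → IsControl U t₀ T u' →
      IsSolution f t₀ T hmax hdel φ u x → IsSolution f t₀ T hmax hdel φ u' x' →
      (∀ t ∈ Set.Icc t₀ T, ‖x t‖ ≤ M₁) → (∀ t ∈ Set.Icc t₀ T, ‖x' t‖ ≤ M₁) →
      ∀ t ∈ Set.Icc t₀ T, ‖x t - x' t‖ ≤ M * dL2 t₀ T u u' := by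
  have hh (j : Fin (k + 1)) : hdel j ∈ Icc 0 hmax :=
    ⟨hdel0 ▸ hmono.monotone (Fin.zero_le j), hlast ▸ hmono.monotone (Fin.le_last j)⟩
  obtain ⟨Cφ, hCφ0, hCφ⟩ := (isCompact_Icc.image_of_continuousOn hφ).isBounded.exists_pos_norm_le
  -- `R` bounds the delayed states, `L` is the Lipschitz modulus of `f` on the ball of radius `R`
  set R := ((k : ℝ) + 1) * max M₁ Cφ
  set L : ℝ → ℝ := fun s => μ s * (((k : ℝ) + 2) * (R + 1))
  set A := ∫ s in t₀..T, ((k : ℝ) + 1) * L s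
  have hL0 (s : ℝ) : 0 ≤ L s :=
    mul_nonneg (hf.μ_nonneg s) (by positivity)
  have hL : MemLp L 2 (volume.restrict (Icc t₀ T)) := hf.μ_L2.mul_const _
  have hA : 0 ≤ A := integral_nonneg hT.le fun s _ => mul_nonneg (by positivity) (hL0 s)
  refine ⟨(2 + 2 * A) ^ ⌈2 * A⌉₊ * √(∫ s in t₀..T, L s ^ 2) + 1, by positivity, ?_⟩
  intro u u' x x' hu hu' hx hx' hbx hbx' t ht
  have hv : BddAbove ((fun r => ‖x r - x' r‖) '' Icc t₀ T) := ⟨M₁ + M₁,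
    forall_mem_image.2 fun r hr => (norm_sub_le _ _).trans (add_le_add (hbx r hr) (hbx' r hr))⟩
  have hφR : ∀ θ ∈ Icc (-hmax) 0, ‖φ θ‖ ≤ Cφ := fun θ hθ => hCφ _ ⟨θ, hθ, rfl⟩
  have hdu := (hu.memLp hU 2).sub (hu'.memLp hU 2)
  calc ‖x t - x' t‖ ≤ (2 + 2 * A) ^ ⌈2 * A⌉₊ * ∫ s in t₀..T, L s * ‖u s - u' s‖ :=
        hx.norm_sub_le_pow_mul_integral hh hx' hv (hL.integrable one_le_two)
          (fun s _ => hL0 s) (hL.integrable_mul hdu.norm)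
          (fun s hs => hf.norm_sub_le hUconv hs (hx.norm_Xh_le hh hφR hbx hs)
            (hx'.norm_Xh_le hh hφR hbx' hs) (hu.2 s hs) (hu'.2 s hs)) t ht
    _ ≤ (2 + 2 * A) ^ ⌈2 * A⌉₊ * (√(∫ s in t₀..T, L s ^ 2) * dL2 t₀ T u u') := by
        gcongr
        exact integral_mul_norm_sub_le_sqrt_mul_dL2 hT.le hL0 hL hdu
    _ ≤ _ := by
        rw [← mul_assoc]
        exact mul_le_mul_of_nonneg_right (le_add_of_nonneg_right zero_le_one) (Real.sqrt_nonneg _)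

/-- Lipschitz-type estimate of the state discrepancy in terms of the `L²` control
discrepancy: `sup_{[t₀,T]} ‖x - x'‖ ≤ M ‖u - u'‖_L²`, with `M` independent of the
controls. -/
theorem state_discrepancy_estimate
    {n m k : ℕ} (t₀ T hmax : ℝ) (hdel : Fin (k + 1) → ℝ) (U : Set (Vec m))
    (f : ℝ → XVec k n → Vec m → Vec n) (l : ℝ → XVec k n → Vec m → ℝ) (μ : ℝ → ℝ)
    (ht₀ : 0 ≤ t₀) (hT : t₀ < T)
    (hdel0 : hdel 0 = 0) (hmono : StrictMono hdel) (hlast : hdel (Fin.last k) = hmax)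
    (hU : IsCompact U) (hUconv : Convex ℝ U) (hUne : U.Nonempty)
    (hf : Assumption1 f U t₀ T μ) (hl : Assumption1 l U t₀ T μ)
    (φ : ℝ → Vec n) (hφ : ContinuousOn φ (Set.Icc (-hmax) (0 : ℝ)))
    (M₁ : ℝ) (hM₁ : 0 < M₁) :
    ∃ M > (0 : ℝ), ∀ (u u' : ℝ → Vec m) (x x' : ℝ → Vec n),
      IsControl U t₀ T u → IsControl U t₀ T u' →
      IsSolution f t₀ T hmax hdel φ u x → IsSolution f t₀ T hmax hdel φ u' x' →
      (∀ t ∈ Set.Icc t₀ T, ‖x t‖ ≤ M₁) → (∀ t ∈ Set.Icc t₀ T, ‖x' t‖ ≤ M₁) →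
      ∀ t ∈ Set.Icc t₀ T, ‖x t - x' t‖ ≤ M * dL2 t₀ T u u' :=
  state_discrepancy_estimate_general t₀ T hmax hdel U f μ hT hdel0 hmono hlast hU hUconv hf φ hφ M₁
end
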